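/- (Corollary 1: the relaxed best-effort controller yields a lower bound on optimal TTS.) Consider a monotonic CTM over a finite horizon T with fixed initial conditions ρ_k(0) ∈ [0, ρ̄_k], q_k(0) ∈ [0, q̄_k], and external demands w_k(t) ≥ 0. Define the relaxed best-effort feedback r_k(t) := the value (l_k/Δt)(ρ_k^c − ρ_k(t)) + φ_k(t)/β̄_k − φ_{k−1}(t) saturated to the interval [(q_k(t) − q̄_k)/Δt + w_k(t), q_k(t)/Δt + w_k(t)] (i.e., without the constant bounds 0 ≤ r ≤ r̄_k), and let TTS_LB be the Total Time Spent of the resulting closed-loop trajectory. Then: (a) this trajectory minimizes TTS over all metering sequences satisfying only the queue constraints 0 ≤ q_k(t) ≤ q̄_k (the relaxed problem); and (b) consequently TTS_LB ≤ TTS(r′) for every metering sequence r′ additionally satisfying 0 ≤ r′_k(t) ≤ r̄_k, so TTS_LB is a lower bound on the optimal value TTS* of the original ramp metering problem. -/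
import Mathlib


open Finset NNReal

/-- A **monotonic Cell Transmission Model** (CTM) of a freeway with `n` cells,
indexed by `k ∈ {1,…,n}` (index `0` refers to the upstream mainline boundary,
and the data attached to indices outside `{1,…,n}` is irrelevant junk).
The fields collect the parameters of the model: cell lengths `l k > 0`,
offramp split ratios `β k ∈ [0,1)`, sampling time `Δt > 0`, jam densities
`ρjam k > 0`, critical densities `ρc k ∈ (0, ρjam k)`, nondecreasing Lipschitz
demand functions `d k` (vanishing for `ρ ≤ 0` and constant on `[ρc k, ∞)`),
nonincreasing Lipschitz supply functions `s k` (constant on `(-∞, ρc k]` and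
vanishing on `[ρjam k, ∞)`), together with Assumption 1 of the paper:
`Δt·cd k ≤ l k·(1 − β k)` and `Δt·cs k ≤ l k`. -/
structure CTM (n : ℕ) where
  /-- cell lengths -/
  l : ℕ → ℝ
  /-- offramp split ratios -/
  β : ℕ → ℝ
  /-- sampling time -/
  Δt : ℝ
  /-- jam densities -/
  ρjam : ℕ → ℝ
  /-- critical densities -/
  ρc : ℕ → ℝ
  /-- demand functions of the fundamental diagram -/
  d : ℕ → ℝ → ℝ
  /-- supply functions of the fundamental diagram -/
  s : ℕ → ℝ → ℝ
  /-- Lipschitz constants of the demand functions -/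
  cd : ℕ → ℝ≥0
  /-- Lipschitz constants of the supply functions -/
  cs : ℕ → ℝ≥0
  hl : ∀ k, 0 < l k
  hβ : ∀ k, 0 ≤ β k ∧ β k < 1
  hΔt : 0 < Δt
  hρjam : ∀ k, 0 < ρjam k
  hρc : ∀ k, 0 < ρc k ∧ ρc k < ρjam k
  hd_nonneg : ∀ k x, 0 ≤ d k x
  hd_mono : ∀ k, Monotone (d k)
  hd_lip : ∀ k, LipschitzWith (cd k) (d k)
  hd_zero : ∀ k x, x ≤ 0 → d k x = 0
  hd_const : ∀ k x, ρc k ≤ x → d k x = d k (ρc k)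
  hs_nonneg : ∀ k x, 0 ≤ s k x
  hs_anti : ∀ k, Antitone (s k)
  hs_lip : ∀ k, LipschitzWith (cs k) (s k)
  hs_const : ∀ k x, x ≤ ρc k → s k x = s k (ρc k)
  hs_zero : ∀ k x, ρjam k ≤ x → s k x = 0
  /-- Assumption 1, demand part: `Δt·cd k ≤ l k·β̄ k`. -/
  assumption1_d : ∀ k, Δt * (cd k : ℝ) ≤ l k * (1 - β k)
  /-- Assumption 1, supply part: `Δt·cs k ≤ l k`. -/
  assumption1_s : ∀ k, Δt * (cs k : ℝ) ≤ l k

namespace CTM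

variable {n : ℕ}

/-- Complement `β̄ k := 1 − β k` of the split ratio. -/
def βbar (M : CTM n) (k : ℕ) : ℝ := 1 - M.β k

/-- Mainline flows as functions of the densities: `φ_0 = w_0` (external upstream
demand), `φ_k = min{d_k(ρ_k), s_{k+1}(ρ_{k+1})}` for `1 ≤ k ≤ n−1`, and
`φ_n = d_n(ρ_n)`. -/
noncomputable def flow (M : CTM n) (w0 : ℝ) (ρ : ℕ → ℝ) (k : ℕ) : ℝ :=
  if k = 0 then w0
  else if k < n then min (M.d k (ρ k)) (M.s (k + 1) (ρ (k + 1)))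
  else M.d n (ρ n)

/-- Interface capacities: `F_k = min{d_k(ρ_k^c), s_{k+1}(ρ_{k+1}^c)}` for
`k ≤ n−1` and `F_n = d_n(ρ_n^c)`. -/
noncomputable def F (M : CTM n) (k : ℕ) : ℝ :=
  if k < n then min (M.d k (M.ρc k)) (M.s (k + 1) (M.ρc (k + 1)))
  else M.d n (M.ρc n)

/-- Saturation `[x]ᵘₗ := min{u, max{x, l}}`. -/
noncomputable def sat (x lo hi : ℝ) : ℝ := min hi (max x lo)

/-- The best-effort metering rate
`r*_k = [ (l_k/Δt)(ρ_k^c − ρ_k) + φ_k/β̄_k − φ_{k−1} ]` saturated to the interval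
`[max{0, (q_k − q̄_k)/Δt + w_k}, min{r̄_k, q_k/Δt + w_k}]`. -/
noncomputable def beRate (M : CTM n) (w0 : ℝ) (ρ q w rbar qbar : ℕ → ℝ) (k : ℕ) : ℝ :=
  sat (M.l k / M.Δt * (M.ρc k - ρ k) + M.flow w0 ρ k / M.βbar k - M.flow w0 ρ (k - 1))
      (max 0 ((q k - qbar k) / M.Δt + w k))
      (min (rbar k) (q k / M.Δt + w k))

/-- One step of the density conservation law:
`ρ_k(t+1) = ρ_k(t) + (Δt/l_k)(φ_{k−1}(t) + r_k(t) − φ_k(t)/β̄_k)`. -/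
noncomputable def ρnext (M : CTM n) (w0 : ℝ) (ρ r : ℕ → ℝ) (k : ℕ) : ℝ :=
  ρ k + M.Δt / M.l k * (M.flow w0 ρ (k - 1) + r k - M.flow w0 ρ k / M.βbar k)

/-- Cell `k` is **restrictive** (Definition 1) if either (i) the onramp is not
full and the inflow is limited by non-maximal supply, or (ii) the onramp is
nonempty and the outflow is limited by non-maximal demand. -/
noncomputable def Restrictive (M : CTM n) (w0 : ℝ) (ρ q qbar : ℕ → ℝ) (k : ℕ) : Prop :=
  (q k < qbar k ∧ M.flow w0 ρ (k - 1) = M.s k (ρ k) ∧ M.s k (ρ k) < M.F (k - 1)) ∨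
  (0 < q k ∧ M.flow w0 ρ k = M.d k (ρ k) ∧ M.d k (ρ k) < M.F k)

/-- Densities recovered from the cumulative state of the CCTM:
`ρ_k = (Φ_{k−1} − Φ_k/β̄_k + R_k)/l_k`. -/
noncomputable def ρof (M : CTM n) (Φ R : ℕ → ℝ) (k : ℕ) : ℝ :=
  (Φ (k - 1) - Φ k / M.βbar k + R k) / M.l k

/-- The CCTM update maps `f_k(Φ, R) := Φ_k + Δt·φ_k`. -/
noncomputable def f (M : CTM n) (w0 : ℝ) (Φ R : ℕ → ℝ) (k : ℕ) : ℝ :=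
  Φ k + M.Δt * M.flow w0 (M.ρof Φ R) k

/-- `Traj M w ρ q r` states that the densities `ρ`, queues `q` obey the CTM
conservation laws under the metering rates `r` and external demands `w`
(`w t 0` is the upstream mainline demand, `w t k` the onramp demand at cell `k`). -/
noncomputable def Traj (M : CTM n) (w : ℕ → ℕ → ℝ) (ρ q r : ℕ → ℕ → ℝ) : Prop :=
  ∀ t k, 1 ≤ k → k ≤ n →
    ρ (t + 1) k = M.ρnext (w t 0) (ρ t) (r t) k ∧
    q (t + 1) k = q t k + M.Δt * (w t k - r t k)

/-- Total Time Spent `TTS = Δt · Σ_{t=0}^{T} Σ_{k=1}^{n} (l_k ρ_k(t) + q_k(t))`. -/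
noncomputable def TTS (M : CTM n) (T : ℕ) (ρ q : ℕ → ℕ → ℝ) : ℝ :=
  M.Δt * ∑ t ∈ Finset.range (T + 1), ∑ k ∈ Finset.Icc 1 n, (M.l k * ρ t k + q t k)

end CTM

namespace CTM

/-- The **relaxed best-effort feedback**: the value
`(l_k/Δt)(ρ_k^c − ρ_k) + φ_k/β̄_k − φ_{k−1}` saturated to the interval
`[(q_k − q̄_k)/Δt + w_k, q_k/Δt + w_k]` — i.e. the best-effort rate *without* the
constant bounds `0 ≤ r ≤ r̄_k`. -/
noncomputable def relaxedBeRate {n : ℕ} (M : CTM n) (w0 : ℝ)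
    (ρ q w qbar : ℕ → ℝ) (k : ℕ) : ℝ :=
  sat (M.l k / M.Δt * (M.ρc k - ρ k) + M.flow w0 ρ k / M.βbar k - M.flow w0 ρ (k - 1))
      ((q k - qbar k) / M.Δt + w k)
      (q k / M.Δt + w k)

end CTM

namespace CTM

variable {n : ℕ}

lemma βbar_pos (M : CTM n) (k : ℕ) : 0 < M.βbar k := by
  have := (M.hβ k).2; unfold βbar; linarith

lemma βbar_le_one (M : CTM n) (k : ℕ) : M.βbar k ≤ 1 := by
  have := (M.hβ k).1; unfold βbar; linarith

lemma d_le_crit (M : CTM n) (k : ℕ) (x : ℝ) : M.d k x ≤ M.d k (M.ρc k) := by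
  rcases le_total x (M.ρc k) with h | h
  · exact M.hd_mono k h
  · rw [M.hd_const k x h]

lemma s_le_crit (M : CTM n) (k : ℕ) (x : ℝ) : M.s k x ≤ M.s k (M.ρc k) := by
  rcases le_total x (M.ρc k) with h | h
  · rw [M.hs_const k x h]
  · exact M.hs_anti k h

lemma flow_zero (M : CTM n) (w0 : ℝ) (ρ : ℕ → ℝ) : M.flow w0 ρ 0 = w0 := by
  simp [flow]

lemma flow_mid (M : CTM n) {w0 : ℝ} {ρ : ℕ → ℝ} {k : ℕ} (h1 : 1 ≤ k) (h2 : k < n) :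
    M.flow w0 ρ k = min (M.d k (ρ k)) (M.s (k + 1) (ρ (k + 1))) := by
  unfold flow; rw [if_neg (by omega), if_pos h2]

lemma flow_top (M : CTM n) {w0 : ℝ} {ρ : ℕ → ℝ} {k : ℕ} (h1 : 1 ≤ k) (h2 : ¬ k < n) :
    M.flow w0 ρ k = M.d n (ρ n) := by
  unfold flow; rw [if_neg (by omega), if_neg h2]

lemma lip_lower {c : ℝ≥0} {f : ℝ → ℝ} (hf : LipschitzWith c f) (x y : ℝ) :
    f x - (c : ℝ) * |x - y| ≤ f y := by
  have h := hf.dist_le_mul x y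
  rw [Real.dist_eq, Real.dist_eq] at h
  have h2 : f x - f y ≤ |f x - f y| := le_abs_self _
  linarith

/-- Monotonicity of the demand part of the CCTM update (uses Assumption 1, demand part). -/
lemma demand_mono (M : CTM n) (k : ℕ) {K₁ K₂ A₁ A₂ : ℝ}
    (hK : K₁ ≤ K₂) (hA : A₁ ≤ A₂) :
    A₁ + M.Δt * M.d k ((K₁ - A₁ / M.βbar k) / M.l k) ≤
      A₂ + M.Δt * M.d k ((K₂ - A₂ / M.βbar k) / M.l k) := by
  have hb := M.βbar_pos k
  have hlk := M.hl k
  have hΔ := M.hΔt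
  set x₁ := (K₁ - A₁ / M.βbar k) / M.l k with hx₁
  set xm := (K₁ - A₂ / M.βbar k) / M.l k with hxm
  set x₂ := (K₂ - A₂ / M.βbar k) / M.l k with hx₂
  have h1 : M.d k xm ≤ M.d k x₂ := by
    apply M.hd_mono k; rw [hxm, hx₂]; gcongr
  set qq := (A₂ - A₁) / (M.βbar k * M.l k) with hqq
  have hq0 : 0 ≤ qq := div_nonneg (by linarith) (mul_pos hb hlk).le
  have hx : x₁ - xm = qq := by rw [hx₁, hxm, hqq]; field_simp; try ring
  have hlip : M.d k x₁ - (M.cd k : ℝ) * qq ≤ M.d k xm := by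
    have := lip_lower (M.hd_lip k) x₁ xm
    rwa [show |x₁ - xm| = qq by rw [hx]; exact abs_of_nonneg hq0] at this
  have hkey : M.Δt * ((M.cd k : ℝ) * qq) ≤ A₂ - A₁ := by
    have ha1 := M.assumption1_d k
    have hmul := mul_le_mul_of_nonneg_right ha1 hq0
    have hcan : qq * (M.βbar k * M.l k) = A₂ - A₁ :=
      div_mul_cancel₀ _ (mul_pos hb hlk).ne'
    have hbb : M.βbar k = 1 - M.β k := rfl
    nlinarith [hmul, hcan]
  have h3 : M.Δt * M.d k x₁ - M.Δt * ((M.cd k : ℝ) * qq) ≤ M.Δt * M.d k xm := by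
    have := mul_le_mul_of_nonneg_left hlip hΔ.le
    rw [mul_sub] at this; linarith
  have h4 : M.Δt * M.d k xm ≤ M.Δt * M.d k x₂ := mul_le_mul_of_nonneg_left h1 hΔ.le
  linarith

/-- Monotonicity of the supply part of the CCTM update (uses Assumption 1, supply part). -/
lemma supply_mono (M : CTM n) (k : ℕ) {K₁ K₂ A₁ A₂ B₁ B₂ : ℝ}
    (hK : K₂ ≤ K₁) (hA : A₁ ≤ A₂) (hB : B₁ ≤ B₂) :
    A₁ + M.Δt * M.s k ((K₁ + A₁ - B₁ / M.βbar k) / M.l k) ≤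
      A₂ + M.Δt * M.s k ((K₂ + A₂ - B₂ / M.βbar k) / M.l k) := by
  have hb := M.βbar_pos k
  have hlk := M.hl k
  have hΔ := M.hΔt
  set x₁ := (K₁ + A₁ - B₁ / M.βbar k) / M.l k with hx₁
  set xm := (K₁ + A₂ - B₁ / M.βbar k) / M.l k with hxm
  set x₂ := (K₂ + A₂ - B₂ / M.βbar k) / M.l k with hx₂
  have h1 : M.s k xm ≤ M.s k x₂ := by
    apply M.hs_anti k; rw [hxm, hx₂]; gcongr
  set qq := (A₂ - A₁) / M.l k with hqq
  have hq0 : 0 ≤ qq := div_nonneg (by linarith) hlk.le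
  have hx : xm - x₁ = qq := by rw [hx₁, hxm, hqq]; field_simp; try ring
  have hlip : M.s k x₁ - (M.cs k : ℝ) * qq ≤ M.s k xm := by
    have := lip_lower (M.hs_lip k) x₁ xm
    rwa [show |x₁ - xm| = qq by rw [abs_sub_comm, hx]; exact abs_of_nonneg hq0] at this
  have hkey : M.Δt * ((M.cs k : ℝ) * qq) ≤ A₂ - A₁ := by
    have ha1 := M.assumption1_s k
    have hmul := mul_le_mul_of_nonneg_right ha1 hq0
    have hcan : qq * M.l k = A₂ - A₁ := div_mul_cancel₀ _ hlk.ne'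
    nlinarith [hmul, hcan]
  have h3 : M.Δt * M.s k x₁ - M.Δt * ((M.cs k : ℝ) * qq) ≤ M.Δt * M.s k xm := by
    have := mul_le_mul_of_nonneg_left hlip hΔ.le
    rw [mul_sub] at this; linarith
  have h4 : M.Δt * M.s k xm ≤ M.Δt * M.s k x₂ := mul_le_mul_of_nonneg_left h1 hΔ.le
  linarith

/-- Cumulative mainline flows. -/
noncomputable def cumΦ (M : CTM n) (w ρ : ℕ → ℕ → ℝ) (t k : ℕ) : ℝ :=
  M.Δt * ∑ s ∈ Finset.range t, M.flow (w s 0) (ρ s) k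

/-- Cumulative metered onramp flows. -/
noncomputable def cumR (M : CTM n) (r : ℕ → ℕ → ℝ) (t k : ℕ) : ℝ :=
  M.Δt * ∑ s ∈ Finset.range t, r s k

/-- Cumulative external demands. -/
noncomputable def cumW (M : CTM n) (w : ℕ → ℕ → ℝ) (t k : ℕ) : ℝ :=
  M.Δt * ∑ s ∈ Finset.range t, w s k

lemma cumΦ_succ (M : CTM n) (w ρ : ℕ → ℕ → ℝ) (t k : ℕ) :
    M.cumΦ w ρ (t + 1) k = M.cumΦ w ρ t k + M.Δt * M.flow (w t 0) (ρ t) k := by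
  unfold cumΦ; rw [Finset.sum_range_succ, mul_add]

/-- The state of any trajectory, expressed through the cumulative variables. -/
lemma state_formula (M : CTM n) (w ρ q r : ℕ → ℕ → ℝ) (htraj : M.Traj w ρ q r) :
    ∀ t k, 1 ≤ k → k ≤ n →
      M.l k * ρ t k =
        M.l k * ρ 0 k + M.cumΦ w ρ t (k - 1) + M.cumR r t k - M.cumΦ w ρ t k / M.βbar k ∧
      q t k = q 0 k + M.cumW w t k - M.cumR r t k := by
  intro t
  induction t with
  | zero =>
    intro k h1 h2
    simp [cumΦ, cumR, cumW]
  | succ t ih =>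
    intro k h1 h2
    obtain ⟨ihρ, ihq⟩ := ih k h1 h2
    obtain ⟨hρ, hq⟩ := htraj t k h1 h2
    constructor
    · rw [hρ]
      unfold ρnext
      rw [cumΦ_succ, cumΦ_succ]
      unfold cumR at ihρ ⊢
      rw [Finset.sum_range_succ]
      have hl := (M.hl k).ne'
      have hexp : M.l k * (M.Δt / M.l k *
          (M.flow (w t 0) (ρ t) (k - 1) + r t k - M.flow (w t 0) (ρ t) k / M.βbar k)) =
          M.Δt *
          (M.flow (w t 0) (ρ t) (k - 1) + r t k - M.flow (w t 0) (ρ t) k / M.βbar k) := by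
        field_simp
      linear_combination ihρ + hexp
    · rw [hq, ihq]
      unfold cumW cumR
      rw [Finset.sum_range_succ, Finset.sum_range_succ, mul_add, mul_add]
      ring

/-- The two structural invariants of the relaxed best-effort closed loop:
at every time `t ≥ 1`, either the queue is empty or the density is supercritical,
and either the queue is full or the density is subcritical. -/
lemma be_invariant (M : CTM n) (w : ℕ → ℕ → ℝ) (qbar : ℕ → ℝ) (hqbar : ∀ k, 0 ≤ qbar k)
    (ρ q r : ℕ → ℕ → ℝ) (htraj : M.Traj w ρ q r)
    (hfb : ∀ t k, 1 ≤ k → k ≤ n →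
      r t k = M.relaxedBeRate (w t 0) (ρ t) (q t) (fun j => w t j) qbar k) :
    ∀ t k, 1 ≤ k → k ≤ n →
      (q (t + 1) k = 0 ∨ M.ρc k ≤ ρ (t + 1) k) ∧
      (q (t + 1) k = qbar k ∨ ρ (t + 1) k ≤ M.ρc k) := by
  intro t k h1 h2
  obtain ⟨hρ, hq⟩ := htraj t k h1 h2
  have hΔ := M.hΔt
  have hl := M.hl k
  set φout := M.flow (w t 0) (ρ t) k with hφout
  set φin := M.flow (w t 0) (ρ t) (k - 1) with hφin
  set v := M.l k / M.Δt * (M.ρc k - ρ t k) + φout / M.βbar k - φin with hv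
  set lo := (q t k - qbar k) / M.Δt + w t k with hlo
  set hi := q t k / M.Δt + w t k with hhi
  have hr : r t k = min hi (max v lo) := hfb t k h1 h2
  have hρnext : ρ (t + 1) k = ρ t k + M.Δt / M.l k * (φin + r t k - φout / M.βbar k) := hρ
  have hcrit : ρ t k + M.Δt / M.l k * (φin + v - φout / M.βbar k) = M.ρc k := by
    rw [hv]; field_simp; ring
  have hmono : ∀ a b : ℝ, a ≤ b →
      ρ t k + M.Δt / M.l k * (φin + a - φout / M.βbar k) ≤
        ρ t k + M.Δt / M.l k * (φin + b - φout / M.βbar k) := by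
    intro a b hab
    have : 0 ≤ M.Δt / M.l k := by positivity
    nlinarith
  constructor
  · rcases min_cases hi (max v lo) with ⟨he, _⟩ | ⟨he, _⟩
    · left
      rw [hq, hr, he, hhi]
      field_simp
      ring
    · right
      have hrv : v ≤ r t k := by rw [hr, he]; exact le_max_left _ _
      calc M.ρc k = ρ t k + M.Δt / M.l k * (φin + v - φout / M.βbar k) := hcrit.symm
        _ ≤ ρ t k + M.Δt / M.l k * (φin + r t k - φout / M.βbar k) := hmono _ _ hrv
        _ = ρ (t + 1) k := hρnext.symm
  · rcases le_or_gt v lo with h | h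
    · left
      have hlohi : lo ≤ hi := by
        rw [hlo, hhi]
        gcongr
        · linarith [hqbar k]
      have hrlo : r t k = lo := by rw [hr, max_eq_right h, min_eq_right hlohi]
      rw [hq, hrlo, hlo]
      field_simp
      try ring
    · right
      have hrv : r t k ≤ v := by
        rw [hr, max_eq_left h.le]; exact min_le_right _ _
      calc ρ (t + 1) k = ρ t k + M.Δt / M.l k * (φin + r t k - φout / M.βbar k) := hρnext
        _ ≤ ρ t k + M.Δt / M.l k * (φin + v - φout / M.βbar k) := hmono _ _ hrv
        _ = M.ρc k := hcrit

lemma telescope (g : ℕ → ℝ) (m : ℕ) :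
    ∑ k ∈ Finset.Icc 1 m, (g (k - 1) - g k) = g 0 - g m := by
  induction m with
  | zero => simp
  | succ m ih =>
    rw [Finset.sum_Icc_succ_top (Nat.one_le_iff_ne_zero.mpr (Nat.succ_ne_zero m)), ih]
    simp

end CTM

/-- **Corollary 1 (the relaxed best-effort controller yields a lower bound on the
optimal TTS).**  Consider a monotonic CTM over a horizon `T` with fixed initial
conditions `ρ_k(0) ∈ [0, ρ̄_k]`, `q_k(0) ∈ [0, q̄_k]`, and external demands
`w_k(t) ≥ 0`.  Let `(ρ, q, r)` be the closed-loop trajectory under the relaxed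
best-effort feedback and let `TTS_LB := TTS(ρ, q)`.  Then (a) this trajectory
minimizes TTS over all metering sequences satisfying only the queue constraints
`0 ≤ q_k(t) ≤ q̄_k` (the relaxed problem); and (b) consequently
`TTS_LB ≤ TTS(r')` for every metering sequence `r'` additionally satisfying
`0 ≤ r'_k(t) ≤ r̄_k`, so `TTS_LB` is a lower bound on the optimal value of the
original ramp metering problem. -/
theorem relaxed_best_effort_lower_bound {n : ℕ} (M : CTM n) (T : ℕ)
    (w : ℕ → ℕ → ℝ) (rbar qbar : ℕ → ℝ)
    (hrbar : ∀ k, 0 ≤ rbar k) (hqbar : ∀ k, 0 ≤ qbar k)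
    (hw0 : ∀ t, 0 ≤ w t 0)
    (hw : ∀ t k, 1 ≤ k → k ≤ n → 0 ≤ w t k)
    (ρ q r : ℕ → ℕ → ℝ)
    (htraj : M.Traj w ρ q r)
    (hfeedback : ∀ t k, 1 ≤ k → k ≤ n →
      r t k = M.relaxedBeRate (w t 0) (ρ t) (q t) (fun j => w t j) qbar k)
    (hinitρ : ∀ k, 1 ≤ k → k ≤ n → ρ 0 k ∈ Set.Icc 0 (M.ρjam k))
    (hinitq : ∀ k, 1 ≤ k → k ≤ n → q 0 k ∈ Set.Icc 0 (qbar k)) :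
    (∀ ρ' q' r' : ℕ → ℕ → ℝ, M.Traj w ρ' q' r' →
      (∀ k, 1 ≤ k → k ≤ n → ρ' 0 k = ρ 0 k ∧ q' 0 k = q 0 k) →
      (∀ t k, t ≤ T → 1 ≤ k → k ≤ n → q' t k ∈ Set.Icc 0 (qbar k)) →
      M.TTS T ρ q ≤ M.TTS T ρ' q') ∧
    (∀ ρ' q' r' : ℕ → ℕ → ℝ, M.Traj w ρ' q' r' →
      (∀ k, 1 ≤ k → k ≤ n → ρ' 0 k = ρ 0 k ∧ q' 0 k = q 0 k) →
      (∀ t k, t ≤ T → 1 ≤ k → k ≤ n → q' t k ∈ Set.Icc 0 (qbar k)) →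
      (∀ t k, t < T → 1 ≤ k → k ≤ n → r' t k ∈ Set.Icc 0 (rbar k)) →
      M.TTS T ρ q ≤ M.TTS T ρ' q') := by
  
  have hΔ := M.hΔt
  have main : ∀ ρ' q' r' : ℕ → ℕ → ℝ, M.Traj w ρ' q' r' →
      (∀ k, 1 ≤ k → k ≤ n → ρ' 0 k = ρ 0 k ∧ q' 0 k = q 0 k) →
      (∀ t k, t ≤ T → 1 ≤ k → k ≤ n → q' t k ∈ Set.Icc 0 (qbar k)) →
      M.TTS T ρ q ≤ M.TTS T ρ' q' := by
    intro ρ' q' r' htraj' hinit' hq'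
    have hstate := M.state_formula w ρ q r htraj
    have hstate' := M.state_formula w ρ' q' r' htraj'
    have hinv := M.be_invariant w qbar hqbar ρ q r htraj hfeedback
    have hΦ0 : ∀ t, M.cumΦ w ρ' t 0 = M.cumΦ w ρ t 0 := by
      intro t; unfold CTM.cumΦ; simp [CTM.flow]
    -- cumulative flow domination
    have hΦ : ∀ t, t ≤ T → ∀ k, k ≤ n → M.cumΦ w ρ' t k ≤ M.cumΦ w ρ t k := by
      intro t
      induction t with
      | zero => intro _ k _; unfold CTM.cumΦ; simp
      | succ t ih =>
        intro ht k hk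
        have ht' : t ≤ T := Nat.le_of_succ_le ht
        have IH := ih ht'
        rw [M.cumΦ_succ, M.cumΦ_succ]
        rcases Nat.eq_zero_or_pos k with rfl | hk1
        · rw [M.flow_zero, M.flow_zero]
          exact add_le_add (IH 0 (Nat.zero_le n)) le_rfl
        rcases Nat.eq_zero_or_pos t with rfl | htpos
        · -- at time 0 the two states coincide, hence so do the flows
          have hfe : M.flow (w 0 0) (ρ' 0) k = M.flow (w 0 0) (ρ 0) k := by
            rcases lt_or_ge k n with hkn | hkn
            · rw [M.flow_mid hk1 hkn, M.flow_mid hk1 hkn,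
                (hinit' k hk1 hk).1, (hinit' (k + 1) (by omega) hkn).1]
            · have hkn' : ¬ k < n := not_lt.2 hkn
              rw [M.flow_top hk1 hkn', M.flow_top hk1 hkn',
                (hinit' n (by omega) le_rfl).1]
          rw [hfe]
          exact add_le_add (IH k hk) le_rfl
        obtain ⟨u, rfl⟩ : ∃ u, t = u + 1 := ⟨t - 1, by omega⟩
        -- demand-side domination at every cell
        have hdemand : ∀ j, 1 ≤ j → j ≤ n →
            M.cumΦ w ρ' (u + 1) j + M.Δt * M.d j (ρ' (u + 1) j) ≤
              M.cumΦ w ρ (u + 1) j + M.Δt * M.d j (ρ (u + 1) j) := by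
          intro j hj1 hj2
          have h0 := hinit' j hj1 hj2
          obtain ⟨hsρ, hsq⟩ := hstate (u + 1) j hj1 hj2
          obtain ⟨hsρ', hsq'⟩ := hstate' (u + 1) j hj1 hj2
          rw [h0.1] at hsρ'
          rw [h0.2] at hsq'
          rcases (hinv u j hj1 hj2).1 with hq0 | hρc
          · -- empty queue: the cumulative metered flow is maximal
            have hq'0 : 0 ≤ q' (u + 1) j := (hq' (u + 1) j (by omega) hj1 hj2).1
            have hRR' : M.cumR r' (u + 1) j ≤ M.cumR r (u + 1) j := by linarith
            have hρeq : ρ (u + 1) j =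
                (M.l j * ρ 0 j + M.cumΦ w ρ (u + 1) (j - 1) + M.cumR r (u + 1) j -
                  M.cumΦ w ρ (u + 1) j / M.βbar j) / M.l j := by
              rw [eq_div_iff (M.hl j).ne']; linarith
            have hρeq' : ρ' (u + 1) j =
                (M.l j * ρ 0 j + M.cumΦ w ρ' (u + 1) (j - 1) + M.cumR r' (u + 1) j -
                  M.cumΦ w ρ' (u + 1) j / M.βbar j) / M.l j := by
              rw [eq_div_iff (M.hl j).ne']; linarith
            rw [hρeq, hρeq']
            exact M.demand_mono j
              (by have h1 := IH (j - 1) (by omega); linarith) (IH j hj2)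
          · -- supercritical density: demand is maximal
            have h1 : M.d j (ρ (u + 1) j) = M.d j (M.ρc j) := M.hd_const j _ hρc
            have h2 : M.d j (ρ' (u + 1) j) ≤ M.d j (M.ρc j) := M.d_le_crit j _
            have h3 : M.Δt * M.d j (ρ' (u + 1) j) ≤ M.Δt * M.d j (ρ (u + 1) j) := by
              rw [h1]; exact mul_le_mul_of_nonneg_left h2 hΔ.le
            have h4 := IH j hj2
            linarith
        -- supply-side domination at every cell
        have hsupply : ∀ j, 1 ≤ j → j ≤ n →
            M.cumΦ w ρ' (u + 1) (j - 1) + M.Δt * M.s j (ρ' (u + 1) j) ≤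
              M.cumΦ w ρ (u + 1) (j - 1) + M.Δt * M.s j (ρ (u + 1) j) := by
          intro j hj1 hj2
          have h0 := hinit' j hj1 hj2
          obtain ⟨hsρ, hsq⟩ := hstate (u + 1) j hj1 hj2
          obtain ⟨hsρ', hsq'⟩ := hstate' (u + 1) j hj1 hj2
          rw [h0.1] at hsρ'
          rw [h0.2] at hsq'
          rcases (hinv u j hj1 hj2).2 with hqfull | hρc
          · -- full queue: the cumulative metered flow is minimal
            have hq'bar : q' (u + 1) j ≤ qbar j := (hq' (u + 1) j (by omega) hj1 hj2).2
            have hRR' : M.cumR r (u + 1) j ≤ M.cumR r' (u + 1) j := by linarith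
            have hρeq : ρ (u + 1) j =
                (M.l j * ρ 0 j + M.cumR r (u + 1) j + M.cumΦ w ρ (u + 1) (j - 1) -
                  M.cumΦ w ρ (u + 1) j / M.βbar j) / M.l j := by
              rw [eq_div_iff (M.hl j).ne']; linarith
            have hρeq' : ρ' (u + 1) j =
                (M.l j * ρ 0 j + M.cumR r' (u + 1) j + M.cumΦ w ρ' (u + 1) (j - 1) -
                  M.cumΦ w ρ' (u + 1) j / M.βbar j) / M.l j := by
              rw [eq_div_iff (M.hl j).ne']; linarith
            rw [hρeq, hρeq']
            exact M.supply_mono j (by linarith) (IH (j - 1) (by omega)) (IH j hj2)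
          · -- subcritical density: supply is maximal
            have h1 : M.s j (ρ (u + 1) j) = M.s j (M.ρc j) := M.hs_const j _ hρc
            have h2 : M.s j (ρ' (u + 1) j) ≤ M.s j (M.ρc j) := M.s_le_crit j _
            have h3 : M.Δt * M.s j (ρ' (u + 1) j) ≤ M.Δt * M.s j (ρ (u + 1) j) := by
              rw [h1]; exact mul_le_mul_of_nonneg_left h2 hΔ.le
            have h4 := IH (j - 1) (by omega)
            linarith
        -- combine
        rcases lt_or_ge k n with hkn | hkn
        · rw [M.flow_mid hk1 hkn, M.flow_mid hk1 hkn]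
          have hd := hdemand k hk1 (le_of_lt hkn)
          have hs := hsupply (k + 1) (by omega) hkn
          simp only [Nat.add_sub_cancel] at hs
          rcases le_total (M.d k (ρ (u + 1) k)) (M.s (k + 1) (ρ (u + 1) (k + 1))) with hm | hm
          · rw [min_eq_left hm]
            have h5 : M.Δt * min (M.d k (ρ' (u + 1) k)) (M.s (k + 1) (ρ' (u + 1) (k + 1))) ≤
                M.Δt * M.d k (ρ' (u + 1) k) :=
              mul_le_mul_of_nonneg_left (min_le_left _ _) hΔ.le
            linarith
          · rw [min_eq_right hm]
            have h5 : M.Δt * min (M.d k (ρ' (u + 1) k)) (M.s (k + 1) (ρ' (u + 1) (k + 1))) ≤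
                M.Δt * M.s (k + 1) (ρ' (u + 1) (k + 1)) :=
              mul_le_mul_of_nonneg_left (min_le_right _ _) hΔ.le
            linarith
        · have hkn' : ¬ k < n := not_lt.2 hkn
          have hkeq : k = n := le_antisymm hk hkn
          subst hkeq
          rw [M.flow_top hk1 hkn', M.flow_top hk1 hkn']
          exact hdemand _ hk1 le_rfl
    -- from flow domination to the TTS comparison
    unfold CTM.TTS
    apply mul_le_mul_of_nonneg_left _ hΔ.le
    apply Finset.sum_le_sum
    intro t htmem
    have htT : t ≤ T := by
      rw [Finset.mem_range, Nat.lt_succ_iff] at htmem; exact htmem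
    rw [← sub_nonneg, ← Finset.sum_sub_distrib]
    have key : ∀ k ∈ Finset.Icc 1 n,
        (M.l k * ρ' t k + q' t k) - (M.l k * ρ t k + q t k) =
          -(((M.cumΦ w ρ t (k - 1) - M.cumΦ w ρ' t (k - 1)) -
            (M.cumΦ w ρ t k - M.cumΦ w ρ' t k) / M.βbar k)) := by
      intro k hkm
      rw [Finset.mem_Icc] at hkm
      obtain ⟨hsρ, hsq⟩ := hstate t k hkm.1 hkm.2
      obtain ⟨hsρ', hsq'⟩ := hstate' t k hkm.1 hkm.2
      have h0 := hinit' k hkm.1 hkm.2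
      rw [h0.1] at hsρ'
      rw [h0.2] at hsq'
      have hdiv : (M.cumΦ w ρ t k - M.cumΦ w ρ' t k) / M.βbar k =
          M.cumΦ w ρ t k / M.βbar k - M.cumΦ w ρ' t k / M.βbar k := sub_div _ _ _
      linarith
    rw [Finset.sum_congr rfl key]
    have hterm : ∀ k ∈ Finset.Icc 1 n,
        (M.cumΦ w ρ t (k - 1) - M.cumΦ w ρ' t (k - 1)) -
          (M.cumΦ w ρ t k - M.cumΦ w ρ' t k) / M.βbar k ≤
        (M.cumΦ w ρ t (k - 1) - M.cumΦ w ρ' t (k - 1)) -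
          (M.cumΦ w ρ t k - M.cumΦ w ρ' t k) := by
      intro k hkm
      rw [Finset.mem_Icc] at hkm
      have hb := M.βbar_pos k
      have hb1 := M.βbar_le_one k
      have hDk : 0 ≤ M.cumΦ w ρ t k - M.cumΦ w ρ' t k :=
        sub_nonneg.2 (hΦ t htT k hkm.2)
      have hcmp : M.cumΦ w ρ t k - M.cumΦ w ρ' t k ≤
          (M.cumΦ w ρ t k - M.cumΦ w ρ' t k) / M.βbar k := by
        rw [le_div_iff₀ hb]
        nlinarith
      linarith
    have htel := CTM.telescope (fun j => M.cumΦ w ρ t j - M.cumΦ w ρ' t j) n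
    have hsum : ∑ k ∈ Finset.Icc 1 n,
        ((M.cumΦ w ρ t (k - 1) - M.cumΦ w ρ' t (k - 1)) -
          (M.cumΦ w ρ t k - M.cumΦ w ρ' t k) / M.βbar k) ≤ 0 := by
      have h1 := Finset.sum_le_sum hterm
      have hg0 : M.cumΦ w ρ t 0 - M.cumΦ w ρ' t 0 = 0 := by
        rw [hΦ0 t]; ring
      have hgn : 0 ≤ M.cumΦ w ρ t n - M.cumΦ w ρ' t n :=
        sub_nonneg.2 (hΦ t htT n le_rfl)
      rw [htel] at h1
      linarith
    rw [Finset.sum_neg_distrib]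
    linarith
  exact ⟨main, fun ρ' q' r' h1 h2 h3 _ => main ρ' q' r' h1 h2 h3⟩
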